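/- With the setup of Halmos' decomposition for projections P, Q (Tr Q = D_ρ, mean G₂, variance σ²), for every λ̃ ∈ (0,1) and every orthonormal basis {b_k} of range(Q), the average absolute deviation satisfies (1/D_ρ)·Σ_{k=1}^{D_ρ} |⟨b_k, P b_k⟩ − G₂| ≤ λ̃ + (1 − λ̃)·σ²/λ̃². -/
import Mathlib
open Matrix Complex Finset Real
open scoped Classical

/-- The outer product `|w⟩⟨w|` as a matrix. -/
noncomputable def outerProd {N : ℕ} (w : Fin N → ℂ) : Matrix (Fin N) (Fin N) ℂ :=
  Matrix.vecMulVec w (star w)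

lemma inner_conj {N : ℕ} (x y : Fin N → ℂ) : star x ⬝ᵥ y = star (star y ⬝ᵥ x) := by
  simp [dotProduct, mul_comm]

lemma dot_sum_right {N n : ℕ} (x : Fin N → ℂ) (f : Fin n → Fin N → ℂ) :
    x ⬝ᵥ (∑ i, f i) = ∑ i, x ⬝ᵥ f i := by
  simp only [dotProduct, Finset.sum_apply, Finset.mul_sum]
  rw [Finset.sum_comm]

lemma dot_smul_right {N : ℕ} (x : Fin N → ℂ) (c : ℂ) (y : Fin N → ℂ) :
    x ⬝ᵥ (c • y) = c * (x ⬝ᵥ y) := by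
  simp [dotProduct, Finset.mul_sum]
  exact Finset.sum_congr rfl fun i _ => by ring

lemma outer_mulVec {N : ℕ} (y x : Fin N → ℂ) :
    (outerProd y).mulVec x = (star y ⬝ᵥ x) • y := by
  funext i
  simp [outerProd, Matrix.mulVec, Matrix.vecMulVec, dotProduct, Finset.mul_sum, mul_comm,
    mul_left_comm]

lemma sum_mulVec' {N n : ℕ} (M : Fin n → Matrix (Fin N) (Fin N) ℂ) (x : Fin N → ℂ) :
    (∑ i, M i).mulVec x = ∑ i, (M i).mulVec x := by
  funext j
  simp only [Matrix.mulVec, dotProduct, Finset.sum_apply, Matrix.sum_apply, Finset.sum_mul]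
  rw [Finset.sum_comm]

lemma expand_in_basis {N n : ℕ} (e : Fin n → Fin N → ℂ)
    (he : ∀ i j, star (e i) ⬝ᵥ e j = if i = j then 1 else 0)
    (x : Fin N → ℂ) (hx : x ∈ Submodule.span ℂ (Set.range e)) :
    x = ∑ l, (star (e l) ⬝ᵥ x) • e l := by
  obtain ⟨d, hd⟩ := (Submodule.mem_span_range_iff_exists_fun ℂ).mp hx
  rw [← hd]
  congr 1
  funext l
  congr 1
  rw [dot_sum_right]
  simp [dot_smul_right, he, Finset.sum_ite_eq']

lemma pointwise_bound (lam x : ℝ) (h0 : 0 < lam) (h1 : lam < 1) (hx : |x| ≤ 1) :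
    |x| ≤ lam + (1 - lam) * x ^ 2 / lam ^ 2 := by
  rcases le_or_gt |x| lam with h | h
  · have : (0:ℝ) ≤ (1 - lam) * x ^ 2 / lam ^ 2 :=
      div_nonneg (mul_nonneg (by linarith) (sq_nonneg x)) (by positivity)
    linarith
  · have hx2 : lam ^ 2 ≤ x ^ 2 := by nlinarith [abs_nonneg x, _root_.sq_abs x]
    have : (1 - lam) ≤ (1 - lam) * x ^ 2 / lam ^ 2 := by
      rw [le_div_iff₀ (by positivity)]
      nlinarith
    linarith

/-- In the Halmos setup for projections `P`, `Q` (mean `G₂`, variance `σ²`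
of `cos²θ_k`), for every `λ̃ ∈ (0,1)` and every orthonormal basis `{b_k}` of `range Q`, the
average absolute deviation satisfies
`(1/D_ρ)·Σ_k |⟨b_k, P b_k⟩ − G₂| ≤ λ̃ + (1 − λ̃)·σ²/λ̃²`. -/
theorem stmt6
    {N DR Dρ : ℕ} (hle : Dρ ≤ DR) (hDρ : 0 < Dρ)
    (P Q : Matrix (Fin N) (Fin N) ℂ)
    (hPh : P.IsHermitian) (hPi : P * P = P)
    (hQh : Q.IsHermitian) (hQi : Q * Q = Q)
    (a : Fin (DR - Dρ) → (Fin N → ℂ)) (u v : Fin Dρ → (Fin N → ℂ))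
    (θ : Fin Dρ → ℝ)
    (hθ : ∀ k, θ k ∈ Set.Icc (0 : ℝ) (π / 2))
    (ha : ∀ j m, star (a j) ⬝ᵥ a m = if j = m then 1 else 0)
    (hu : ∀ k l, star (u k) ⬝ᵥ u l = if k = l then 1 else 0)
    (hv : ∀ k l, star (v k) ⬝ᵥ v l = if k = l then 1 else 0)
    (hau : ∀ j k, star (a j) ⬝ᵥ u k = 0)
    (hav : ∀ j k, star (a j) ⬝ᵥ v k = 0)
    (huv : ∀ k l, star (u k) ⬝ᵥ v l = 0)
    (w : Fin Dρ → (Fin N → ℂ))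
    (hw : ∀ k, w k = fun i =>
      (Real.cos (θ k) : ℂ) * u k i + (Real.sin (θ k) : ℂ) * v k i)
    (hP : P = (∑ j, outerProd (a j)) + ∑ k, outerProd (u k))
    (hQ : Q = ∑ k, outerProd (w k))
    (G₂ σsq : ℝ)
    (hG : G₂ = (1 / (Dρ : ℝ)) * ∑ k, (Real.cos (θ k)) ^ 2)
    (hσ : σsq = (1 / (Dρ : ℝ)) * ∑ k, ((Real.cos (θ k)) ^ 2 - G₂) ^ 2)
    (b : Fin Dρ → (Fin N → ℂ))
    (hb : ∀ k l, star (b k) ⬝ᵥ b l = if k = l then 1 else 0)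
    (hbmem : ∀ k, b k ∈ Submodule.span ℂ (Set.range w))
    (hbspan : Submodule.span ℂ (Set.range b) = Submodule.span ℂ (Set.range w))
    (lam : ℝ) (hlam0 : 0 < lam) (hlam1 : lam < 1) :
    (1 / (Dρ : ℝ)) * ∑ k, |(star (b k) ⬝ᵥ P.mulVec (b k)).re - G₂|
      ≤ lam + (1 - lam) * σsq / lam ^ 2 := by
  have hD : (0:ℝ) < (Dρ : ℝ) := by exact_mod_cast hDρ
  -- vector form of w
  have hwv : ∀ k, w k = (Real.cos (θ k) : ℂ) • u k + (Real.sin (θ k) : ℂ) • v k := by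
    intro k; funext i; simp [hw k]
  have hvu : ∀ k l, star (v k) ⬝ᵥ u l = 0 := by
    intro k l; rw [inner_conj]; rw [huv]; simp
  -- inner products with w
  have haw : ∀ j l, star (a j) ⬝ᵥ w l = 0 := by
    intro j l; rw [hwv]; simp [dotProduct_add, dot_smul_right, hau, hav]
  have huw : ∀ l m, star (u l) ⬝ᵥ w m = if l = m then (Real.cos (θ m) : ℂ) else 0 := by
    intro l m
    rw [hwv]
    simp [dotProduct_add, dot_smul_right, hu, huv, mul_ite]
  have hvw : ∀ l m, star (v l) ⬝ᵥ w m = if l = m then (Real.sin (θ m) : ℂ) else 0 := by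
    intro l m
    rw [hwv]
    simp [dotProduct_add, dot_smul_right, hv, hvu, mul_ite]
  have hww : ∀ l m, star (w l) ⬝ᵥ w m = if l = m then 1 else 0 := by
    intro l m
    rw [hwv l]
    rw [star_add, star_smul, star_smul, add_dotProduct, smul_dotProduct, smul_dotProduct,
      huw, hvw]
    by_cases h : l = m
    · subst h
      have h1 : Real.sin (θ l) ^ 2 + Real.cos (θ l) ^ 2 = 1 := Real.sin_sq_add_cos_sq _
      simp only [if_pos rfl, smul_eq_mul, Complex.star_def, Complex.conj_ofReal, if_true]
      norm_cast
      nlinarith [h1]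
    · simp [h]
  -- coefficients
  set c : Fin Dρ → Fin Dρ → ℂ := fun k l => star (w l) ⬝ᵥ b k with hc
  have hbw : ∀ k, b k = ∑ l, c k l • w l := fun k =>
    expand_in_basis w hww (b k) (hbmem k)
  have hcconj : ∀ k l, star (b k) ⬝ᵥ w l = starRingEnd ℂ (c k l) := by
    intro k l; rw [inner_conj]; rfl
  have hwb : ∀ l, w l = ∑ k, (starRingEnd ℂ (c k l)) • b k := by
    intro l
    have hmem : w l ∈ Submodule.span ℂ (Set.range b) := by
      rw [hbspan]; exact Submodule.subset_span ⟨l, rfl⟩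
    have := expand_in_basis b hb (w l) hmem
    rw [this]
    congr 1; funext k; rw [hcconj]
  -- row sums
  have hrow : ∀ k, ∑ l, Complex.normSq (c k l) = 1 := by
    intro k
    have h1 : star (b k) ⬝ᵥ (∑ l, c k l • w l) = 1 := by rw [← hbw k, hb]; simp
    rw [dot_sum_right] at h1
    have h2 : ∀ l, star (b k) ⬝ᵥ (c k l • w l) = (Complex.normSq (c k l) : ℂ) := by
      intro l
      rw [dot_smul_right, hcconj, Complex.mul_conj]
    rw [Finset.sum_congr rfl fun l _ => h2 l] at h1
    have : ((∑ l, Complex.normSq (c k l) : ℝ) : ℂ) = 1 := by push_cast; exact h1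
    exact_mod_cast this
  -- column sums
  have hcol : ∀ l, ∑ k, Complex.normSq (c k l) = 1 := by
    intro l
    have h1 : star (w l) ⬝ᵥ (∑ k, (starRingEnd ℂ) (c k l) • b k) = 1 := by
      rw [← hwb l, hww]; simp
    rw [dot_sum_right] at h1
    have h2 : ∀ k, star (w l) ⬝ᵥ ((starRingEnd ℂ (c k l)) • b k) =
        (Complex.normSq (c k l) : ℂ) := by
      intro k
      rw [dot_smul_right]
      have : star (w l) ⬝ᵥ b k = c k l := rfl
      rw [this, mul_comm, Complex.mul_conj]
    rw [Finset.sum_congr rfl fun k _ => h2 k] at h1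
    have : ((∑ k, Complex.normSq (c k l) : ℝ) : ℂ) = 1 := by push_cast; exact h1
    exact_mod_cast this
  -- inner products of basis vectors with b
  have hab : ∀ j k, star (a j) ⬝ᵥ b k = 0 := by
    intro j k
    rw [hbw k, dot_sum_right]
    simp [dot_smul_right, haw]
  have hub : ∀ l k, star (u l) ⬝ᵥ b k = (Real.cos (θ l) : ℂ) * c k l := by
    intro l k
    rw [hbw k, dot_sum_right]
    rw [Finset.sum_congr rfl fun m _ => dot_smul_right _ _ _]
    simp only [huw, mul_ite, mul_zero, mul_one]
    simp [Finset.sum_ite_eq, mul_comm]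
  -- the diagonal value
  have hval : ∀ k, (star (b k) ⬝ᵥ P.mulVec (b k)).re
      = ∑ l, (Real.cos (θ l)) ^ 2 * Complex.normSq (c k l) := by
    intro k
    have : star (b k) ⬝ᵥ P.mulVec (b k)
        = ((∑ l, (Real.cos (θ l)) ^ 2 * Complex.normSq (c k l) : ℝ) : ℂ) := by
      rw [hP, Matrix.add_mulVec, sum_mulVec', sum_mulVec', dotProduct_add,
        dot_sum_right, dot_sum_right]
      have hA : ∀ j, star (b k) ⬝ᵥ (outerProd (a j)).mulVec (b k) = 0 := by
        intro j
        rw [outer_mulVec, dot_smul_right, hab]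
        simp
      have hU : ∀ l, star (b k) ⬝ᵥ (outerProd (u l)).mulVec (b k)
          = (((Real.cos (θ l)) ^ 2 * Complex.normSq (c k l) : ℝ) : ℂ) := by
        intro l
        rw [outer_mulVec, dot_smul_right, hub]
        have h3 : star (b k) ⬝ᵥ u l = starRingEnd ℂ ((Real.cos (θ l) : ℂ) * c k l) := by
          rw [inner_conj, hub]; rfl
        rw [h3, _root_.map_mul, Complex.conj_ofReal]
        have h4 : (Real.cos (θ l) : ℂ) * c k l * ((Real.cos (θ l) : ℂ)
            * starRingEnd ℂ (c k l))
            = ((Real.cos (θ l) : ℂ)) ^ 2 * (c k l * starRingEnd ℂ (c k l)) := by ring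
        rw [h4, Complex.mul_conj]
        push_cast
        ring
      rw [Finset.sum_congr rfl fun j _ => hA j, Finset.sum_congr rfl fun l _ => hU l]
      push_cast
      simp
    rw [this, Complex.ofReal_re]
  -- bounds on G₂ and cos²
  have hcos01 : ∀ l, 0 ≤ (Real.cos (θ l)) ^ 2 ∧ (Real.cos (θ l)) ^ 2 ≤ 1 :=
    fun l => ⟨sq_nonneg _, Real.cos_sq_le_one _⟩
  have hG0 : 0 ≤ G₂ := by
    rw [hG]
    apply mul_nonneg (by positivity)
    exact Finset.sum_nonneg fun l _ => (hcos01 l).1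
  have hG1 : G₂ ≤ 1 := by
    rw [hG]
    have : ∑ k, (Real.cos (θ k)) ^ 2 ≤ (Dρ : ℝ) := by
      calc ∑ k, (Real.cos (θ k)) ^ 2 ≤ ∑ k : Fin Dρ, (1:ℝ) :=
            Finset.sum_le_sum fun k _ => (hcos01 k).2
        _ = (Dρ : ℝ) := by simp
    rw [one_div, inv_mul_le_iff₀ hD]
    simpa using this
  have hx1 : ∀ l, |(Real.cos (θ l)) ^ 2 - G₂| ≤ 1 := by
    intro l
    rw [abs_le]
    constructor <;> [linarith [(hcos01 l).1]; linarith [(hcos01 l).2]]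
  -- step 1: per-k bound
  have step1 : ∀ k, |(star (b k) ⬝ᵥ P.mulVec (b k)).re - G₂|
      ≤ ∑ l, Complex.normSq (c k l) * |(Real.cos (θ l)) ^ 2 - G₂| := by
    intro k
    rw [hval k]
    have hexp : ∑ l, Complex.normSq (c k l) * ((Real.cos (θ l)) ^ 2 - G₂)
        = (∑ l, (Real.cos (θ l)) ^ 2 * Complex.normSq (c k l))
          - (∑ l, Complex.normSq (c k l)) * G₂ := by
      rw [Finset.sum_mul, ← Finset.sum_sub_distrib]
      exact Finset.sum_congr rfl fun l _ => by ring
    have hrw : ∑ l, (Real.cos (θ l)) ^ 2 * Complex.normSq (c k l) - G₂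
        = ∑ l, Complex.normSq (c k l) * ((Real.cos (θ l)) ^ 2 - G₂) := by
      rw [hexp, hrow k, one_mul]
    rw [hrw]
    calc |∑ l, Complex.normSq (c k l) * ((Real.cos (θ l)) ^ 2 - G₂)|
        ≤ ∑ l, |Complex.normSq (c k l) * ((Real.cos (θ l)) ^ 2 - G₂)| :=
          Finset.abs_sum_le_sum_abs _ _
      _ = ∑ l, Complex.normSq (c k l) * |(Real.cos (θ l)) ^ 2 - G₂| := by
          refine Finset.sum_congr rfl fun l _ => ?_
          rw [_root_.abs_mul, _root_.abs_of_nonneg (Complex.normSq_nonneg _)]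
  -- step 2: sum over k
  have step2 : ∑ k, |(star (b k) ⬝ᵥ P.mulVec (b k)).re - G₂|
      ≤ ∑ l, |(Real.cos (θ l)) ^ 2 - G₂| := by
    calc ∑ k, |(star (b k) ⬝ᵥ P.mulVec (b k)).re - G₂|
        ≤ ∑ k, ∑ l, Complex.normSq (c k l) * |(Real.cos (θ l)) ^ 2 - G₂| :=
          Finset.sum_le_sum fun k _ => step1 k
      _ = ∑ l, (∑ k, Complex.normSq (c k l)) * |(Real.cos (θ l)) ^ 2 - G₂| := by
          rw [Finset.sum_comm]
          exact Finset.sum_congr rfl fun l _ => (Finset.sum_mul ..).symm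
      _ = ∑ l, |(Real.cos (θ l)) ^ 2 - G₂| := by
          refine Finset.sum_congr rfl fun l _ => ?_
          rw [hcol l, one_mul]
  -- step 3: Chebyshev-style pointwise bound
  have step3 : ∑ l, |(Real.cos (θ l)) ^ 2 - G₂|
      ≤ (Dρ : ℝ) * lam + (1 - lam) / lam ^ 2 * ∑ l, ((Real.cos (θ l)) ^ 2 - G₂) ^ 2 := by
    calc ∑ l, |(Real.cos (θ l)) ^ 2 - G₂|
        ≤ ∑ l, (lam + (1 - lam) * ((Real.cos (θ l)) ^ 2 - G₂) ^ 2 / lam ^ 2) :=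
          Finset.sum_le_sum fun l _ => pointwise_bound lam _ hlam0 hlam1 (hx1 l)
      _ = (Dρ : ℝ) * lam + (1 - lam) / lam ^ 2 * ∑ l, ((Real.cos (θ l)) ^ 2 - G₂) ^ 2 := by
          rw [Finset.sum_add_distrib, Finset.mul_sum]
          simp only [Finset.sum_const, Finset.card_univ, Fintype.card_fin, nsmul_eq_mul]
          congr 1
          exact Finset.sum_congr rfl fun l _ => by ring
  -- combine
  calc (1 / (Dρ : ℝ)) * ∑ k, |(star (b k) ⬝ᵥ P.mulVec (b k)).re - G₂|
      ≤ (1 / (Dρ : ℝ)) * ((Dρ : ℝ) * lam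
          + (1 - lam) / lam ^ 2 * ∑ l, ((Real.cos (θ l)) ^ 2 - G₂) ^ 2) := by
        apply mul_le_mul_of_nonneg_left _ (by positivity)
        exact le_trans step2 step3
    _ = lam + (1 - lam) * σsq / lam ^ 2 := by
        rw [hσ]
        field_simp
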